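/- Let μ be a probability measure on [0, 1] with density f with respect to Lebesgue measure, and suppose there are constants c > 0, δ > 0, C > 0 such that |f(x) − c| ≤ C (1 − x)^δ for all x ∈ [0, 1). Then, with ζ_μ(k) = ∑_{j=1}^∞ m_j^k the moment zeta function of μ, there is a constant C′ such that |∑_{k=2}^n (−1)^k C(n,k) ζ_μ(k) − c n log n| ≤ C′ n for all n ≥ 2. -/

import Mathlib

/-!
By the binomial theorem the alternating sum equals `∑ⱼ φₙ(m_{j+1})` with
`φₙ(x) = (1 - x)ⁿ - 1 + n x`, and `max (0, n x - 1) ≤ φₙ(x) ≤ min (n x, n² x² / 2)` on `[0, 1]`.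
The density hypothesis gives `|mⱼ - c / (j + 1)| ≤ C ∫ xʲ (1 - x)^δ`, and these errors are
summable because `∑ⱼ xʲ⁺¹ (1 - x)^δ ≤ (1 - x)^(δ - 1)` is integrable; hence
`∑_{j<n} m_{j+1} = c log n + O(1)` and `m_{j+1} = O(1 / (j + 1))`. The terms `j < n` therefore
contribute `n ∑_{j<n} m_{j+1} + O(n) = c n log n + O(n)`, and the terms `j ≥ n` contribute
`O(n² ∑_{j≥n} 1 / (j + 1)²) = O(n)`.
-/

open MeasureTheory Finset

theorem sum_Icc_two_neg_one_pow_mul_choose_mul_pow (n : ℕ) (x : ℝ) :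
    ∑ k ∈ Icc 2 n, (-1 : ℝ) ^ k * (n.choose k : ℝ) * x ^ k = (1 - x) ^ n - 1 + n * x := by
  rcases n with _ | n
  · simp
  have hbinom : (1 - x) ^ (n + 1) =
      ∑ k ∈ range (n + 2), (-1 : ℝ) ^ k * ((n + 1).choose k : ℝ) * x ^ k := by
    rw [sub_eq_add_neg, add_comm, add_pow]
    refine sum_congr rfl fun k _ => ?_
    rw [neg_pow]; ring
  rw [hbinom, sum_range_succ', sum_range_succ', ← Ico_add_one_right_eq_Icc, sum_Ico_eq_sum_range]
  simp only [Nat.reduceSubDiff, add_comm 2, zero_add, pow_one, Nat.choose_one_right, Nat.cast_add,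
    Nat.cast_one, neg_mul, one_mul, neg_add_rev, pow_zero, Nat.choose_zero_right, mul_one,
    add_sub_cancel_right]
  ring

section BinomialRemainder

variable {x : ℝ}

theorem one_sub_pow_sub_one_add_nonneg (hx : x ≤ 1) (n : ℕ) : 0 ≤ (1 - x) ^ n - 1 + n * x := by
  have := one_add_mul_le_pow (a := -x) (by linarith) n
  rw [← sub_eq_add_neg] at this
  linarith

theorem one_sub_pow_sub_one_add_le_mul (hx0 : 0 ≤ x) (hx1 : x ≤ 1) (n : ℕ) :
    (1 - x) ^ n - 1 + n * x ≤ n * x := by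
  linarith [pow_le_one₀ (n := n) (sub_nonneg.2 hx1) (sub_le_self 1 hx0)]

theorem mul_sub_one_le_one_sub_pow_sub_one_add (hx : x ≤ 1) (n : ℕ) :
    n * x - 1 ≤ (1 - x) ^ n - 1 + n * x := by
  linarith [pow_nonneg (sub_nonneg.2 hx) n]

theorem one_sub_pow_sub_one_add_le_sq (hx0 : 0 ≤ x) (hx1 : x ≤ 1) (n : ℕ) :
    (1 - x) ^ n - 1 + n * x ≤ n ^ 2 * x ^ 2 / 2 := by
  induction n with
  | zero => simp
  | succ n ih =>
    have hrec : (1 - x) ^ (n + 1) - 1 + (n + 1 : ℕ) * x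
        = (1 - x) * ((1 - x) ^ n - 1 + n * x) + n * x ^ 2 := by push_cast; ring
    have hstep : (1 - x) * ((1 - x) ^ n - 1 + n * x) ≤ n ^ 2 * x ^ 2 / 2 :=
      (mul_le_of_le_one_left (one_sub_pow_sub_one_add_nonneg hx1 n) (sub_le_self 1 hx0)).trans ih
    rw [hrec]
    push_cast
    nlinarith [mul_nonneg (Nat.cast_nonneg (α := ℝ) n) (sq_nonneg x), sq_nonneg x]

end BinomialRemainder

theorem abs_sum_range_one_div_add_two_sub_log_le (n : ℕ) :
    |∑ j ∈ range n, 1 / ((j : ℝ) + 2) - Real.log n| ≤ 1 := by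
  have hsucc : (harmonic (n + 1) : ℝ) = 1 + ∑ j ∈ range n, 1 / ((j : ℝ) + 2) := by
    simp only [harmonic, sum_range_succ']
    push_cast
    ring_nf
  have hlast : (harmonic (n + 1) : ℝ) = harmonic n + 1 / ((n : ℝ) + 1) := by
    simp [harmonic, sum_range_succ]
  have hupper := harmonic_le_one_add_log n
  have hlower := log_add_one_le_harmonic (n + 1)
  have hlog : Real.log n ≤ Real.log ↑(n + 1 + 1) := by
    rcases n.eq_zero_or_pos with rfl | hn
    · simp [Real.log_nonneg]
    · exact Real.log_le_log (by positivity) (by push_cast; linarith)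
  have hinv : 1 / ((n : ℝ) + 1) ≤ 1 :=
    div_le_one_of_le₀ (le_add_of_nonneg_left n.cast_nonneg) (by positivity)
  rw [abs_le]
  constructor <;> linarith

theorem sum_range_one_div_add_succ_sq_le {n : ℕ} (hn : 0 < n) (J : ℕ) :
    ∑ i ∈ range J, 1 / ((i : ℝ) + n + 1) ^ 2 ≤ 1 / (n : ℝ) := by
  have hterm (i : ℕ) :
      1 / ((i : ℝ) + n + 1) ^ 2 ≤ 1 / ((i : ℝ) + n) - 1 / (((i + 1 : ℕ) : ℝ) + n) := by
    have : (0 : ℝ) < i + n := by positivity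
    rw [div_sub_div _ _ this.ne' (by positivity), div_le_div_iff₀ (by positivity) (by positivity)]
    push_cast
    nlinarith
  calc ∑ i ∈ range J, 1 / ((i : ℝ) + n + 1) ^ 2
      ≤ ∑ i ∈ range J, (1 / ((i : ℝ) + n) - 1 / (((i + 1 : ℕ) : ℝ) + n)) :=
        sum_le_sum fun i _ => hterm i
    _ = 1 / n - 1 / ((J : ℝ) + n) := by rw [sum_range_sub' (fun i : ℕ => 1 / ((i : ℝ) + n))]; simp
    _ ≤ 1 / (n : ℝ) := sub_le_self _ (by positivity)

section Sequence

variable {a : ℕ → ℝ}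

theorem sum_Icc_two_neg_one_pow_mul_choose_mul_tsum_pow (ha0 : ∀ j, 0 ≤ a j) (ha1 : ∀ j, a j ≤ 1)
    (hsq : Summable fun j => a j ^ 2) (n : ℕ) :
    ∑ k ∈ Icc 2 n, (-1 : ℝ) ^ k * (n.choose k : ℝ) * ∑' j, a j ^ k
      = ∑' j, ((1 - a j) ^ n - 1 + n * a j) := by
  have hpow : ∀ k ∈ Icc 2 n, Summable fun j => (-1 : ℝ) ^ k * (n.choose k : ℝ) * a j ^ k :=
    fun k hk => (hsq.of_nonneg_of_le (fun j => pow_nonneg (ha0 j) k)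
      fun j => pow_le_pow_of_le_one (ha0 j) (ha1 j) (mem_Icc.1 hk).1).mul_left _
  simp_rw [← tsum_mul_left, ← Summable.tsum_finsetSum hpow,
    sum_Icc_two_neg_one_pow_mul_choose_mul_pow]

variable {c K B : ℝ}

theorem sq_le_of_le_div_succ (ha0 : ∀ j, 0 ≤ a j) (haK : ∀ j : ℕ, a j ≤ K / (j + 1)) (j : ℕ) :
    a j ^ 2 ≤ K ^ 2 * (1 / ((j : ℝ) + 1) ^ 2) :=
  (pow_le_pow_left₀ (ha0 j) (haK j) 2).trans_eq (by rw [div_pow, mul_one_div])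

theorem tsum_one_sub_pow_sub_one_add_nat_add_le (ha0 : ∀ j, 0 ≤ a j) (ha1 : ∀ j, a j ≤ 1)
    (haK : ∀ j : ℕ, a j ≤ K / (j + 1)) {n : ℕ} (hn : 0 < n) :
    ∑' i, ((1 - a (i + n)) ^ n - 1 + n * a (i + n)) ≤ K ^ 2 / 2 * n := by
  refine Real.tsum_le_of_sum_range_le (fun i => one_sub_pow_sub_one_add_nonneg (ha1 _) n)
    fun J => ?_
  calc ∑ i ∈ range J, ((1 - a (i + n)) ^ n - 1 + n * a (i + n))
      ≤ ∑ i ∈ range J, (n : ℝ) ^ 2 * K ^ 2 / 2 * (1 / ((i : ℝ) + n + 1) ^ 2) := by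
        refine sum_le_sum fun i _ => (one_sub_pow_sub_one_add_le_sq (ha0 _) (ha1 _) n).trans ?_
        have := sq_le_of_le_div_succ ha0 haK (i + n)
        push_cast at this
        nlinarith [sq_nonneg (n : ℝ)]
    _ ≤ (n : ℝ) ^ 2 * K ^ 2 / 2 * (1 / n) := by
        rw [← mul_sum]
        exact mul_le_mul_of_nonneg_left (sum_range_one_div_add_succ_sq_le hn J) (by positivity)
    _ = K ^ 2 / 2 * n := by field_simp

theorem abs_sum_neg_one_pow_mul_choose_mul_tsum_pow_sub_le (ha0 : ∀ j, 0 ≤ a j)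
    (ha1 : ∀ j, a j ≤ 1) (haK : ∀ j : ℕ, a j ≤ K / (j + 1))
    (hB : ∀ n : ℕ, |∑ j ∈ range n, a j - c * Real.log n| ≤ B) {n : ℕ} (hn : 0 < n) :
    |(∑ k ∈ Icc 2 n, (-1 : ℝ) ^ k * (n.choose k : ℝ) * ∑' j, a j ^ k) - c * n * Real.log n|
      ≤ (B + 1 + K ^ 2 / 2) * n := by
  have hbase : Summable fun j : ℕ => 1 / ((j : ℝ) + 1) ^ 2 := by
    exact_mod_cast (summable_nat_add_iff 1).2 (Real.summable_one_div_nat_pow.2 one_lt_two)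
  have hsq : Summable fun j => a j ^ 2 :=
    (hbase.mul_left (K ^ 2)).of_nonneg_of_le (fun j => sq_nonneg _) (sq_le_of_le_div_succ ha0 haK)
  have hsummable : Summable fun j => (1 - a j) ^ n - 1 + n * a j :=
    ((hsq.mul_left ((n : ℝ) ^ 2 / 2))).of_nonneg_of_le
      (fun j => one_sub_pow_sub_one_add_nonneg (ha1 j) n)
      fun j => (one_sub_pow_sub_one_add_le_sq (ha0 j) (ha1 j) n).trans_eq (by ring)
  have hhead_le : ∑ j ∈ range n, ((1 - a j) ^ n - 1 + n * a j) ≤ n * ∑ j ∈ range n, a j := by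
    rw [mul_sum]
    exact sum_le_sum fun j _ => one_sub_pow_sub_one_add_le_mul (ha0 j) (ha1 j) n
  have hhead_ge : n * ∑ j ∈ range n, a j - n ≤ ∑ j ∈ range n, ((1 - a j) ^ n - 1 + n * a j) := by
    have := sum_le_sum fun j (_ : j ∈ range n) => mul_sub_one_le_one_sub_pow_sub_one_add (ha1 j) n
    rwa [sum_sub_distrib, ← mul_sum, sum_const, card_range, nsmul_one] at this
  have htail_nonneg : 0 ≤ ∑' i, ((1 - a (i + n)) ^ n - 1 + n * a (i + n)) :=
    tsum_nonneg fun i => one_sub_pow_sub_one_add_nonneg (ha1 _) n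
  have htail_le := tsum_one_sub_pow_sub_one_add_nat_add_le ha0 ha1 haK hn
  have hpartial := abs_le.1 (hB n)
  rw [sum_Icc_two_neg_one_pow_mul_choose_mul_tsum_pow ha0 ha1 hsq,
    ← hsummable.sum_add_tsum_nat_add n, abs_le]
  constructor <;> nlinarith

end Sequence

section BetaIntegrals

variable {δ : ℝ}

theorem integral_Icc_pow (j : ℕ) : ∫ x in Set.Icc (0 : ℝ) 1, x ^ j = 1 / ((j : ℝ) + 1) := by
  rw [integral_Icc_eq_integral_Ioc, ← intervalIntegral.integral_of_le zero_le_one, integral_pow]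
  simp

theorem integrableOn_pow_mul_one_sub_rpow (hδ : 0 ≤ δ) (j : ℕ) :
    IntegrableOn (fun x : ℝ => x ^ j * (1 - x) ^ δ) (Set.Icc 0 1) :=
  ((continuous_pow j).mul ((Real.continuous_rpow_const hδ).comp
    (continuous_const.sub continuous_id))).continuousOn.integrableOn_compact isCompact_Icc

theorem integral_pow_mul_one_sub_rpow_le (hδ : 0 ≤ δ) (j : ℕ) :
    ∫ x in Set.Icc (0 : ℝ) 1, x ^ j * (1 - x) ^ δ ≤ 1 / ((j : ℝ) + 1) := by
  rw [← integral_Icc_pow j]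
  refine setIntegral_mono_on (integrableOn_pow_mul_one_sub_rpow hδ j)
    ((continuous_pow j).continuousOn.integrableOn_compact isCompact_Icc) measurableSet_Icc
    fun x hx => mul_le_of_le_one_right (pow_nonneg hx.1 j) ?_
  exact Real.rpow_le_one (sub_nonneg.2 hx.2) (sub_le_self 1 hx.1) hδ

theorem intervalIntegrable_one_sub_rpow_sub_one (hδ : 0 < δ) :
    IntervalIntegrable (fun x : ℝ => (1 - x) ^ (δ - 1)) volume 0 1 := by
  simpa using ((intervalIntegral.intervalIntegrable_rpow' (a := 0) (b := 1) (r := δ - 1)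
    (by linarith)).comp_sub_left 1).symm

theorem integral_one_sub_rpow_sub_one (hδ : 0 < δ) :
    ∫ x in (0 : ℝ)..1, (1 - x) ^ (δ - 1) = 1 / δ := by
  rw [intervalIntegral.integral_comp_sub_left (fun x => x ^ (δ - 1)) 1, sub_self, sub_zero,
    integral_rpow (Or.inl (by linarith)), sub_add_cancel, Real.zero_rpow hδ.ne', Real.one_rpow]
  simp

theorem sum_range_integral_pow_succ_mul_one_sub_rpow_le (hδ : 0 < δ) (N : ℕ) :
    ∑ j ∈ range N, ∫ x in Set.Icc (0 : ℝ) 1, x ^ (j + 1) * (1 - x) ^ δ ≤ 1 / δ := by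
  have hw := intervalIntegrable_one_sub_rpow_sub_one hδ
  rw [intervalIntegrable_iff_integrableOn_Ioo_of_le zero_le_one] at hw
  rw [← integral_finsetSum _ fun j _ => integrableOn_pow_mul_one_sub_rpow hδ.le (j + 1),
    ← integral_one_sub_rpow_sub_one hδ, intervalIntegral.integral_of_le zero_le_one,
    integral_Icc_eq_integral_Ioo, integral_Ioc_eq_integral_Ioo]
  refine setIntegral_mono_on (IntegrableOn.mono_set (integrable_finsetSum _ fun j _ =>
      integrableOn_pow_mul_one_sub_rpow hδ.le (j + 1)) Set.Ioo_subset_Icc_self) hw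
    measurableSet_Ioo fun x ⟨hx0, hx1⟩ => ?_
  have hpos : 0 < 1 - x := sub_pos.2 hx1
  have hgeom : ∑ j ∈ range N, x ^ (j + 1) * (1 - x) ^ δ
      = x * (1 - x ^ N) * (1 - x) ^ (δ - 1) := by
    simp_rw [Real.rpow_sub_one hpos.ne', ← mul_neg_geom_sum, pow_succ, ← sum_mul]
    field_simp
  have hfactor : x * (1 - x ^ N) ≤ 1 := by
    nlinarith [pow_nonneg hx0.le N, pow_le_one₀ hx0.le hx1.le (n := N)]
  rw [hgeom]
  exact mul_le_of_le_one_left (Real.rpow_nonneg hpos.le _) hfactor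

end BetaIntegrals

section Density

variable {f : ℝ → ℝ} {c δ C : ℝ}

theorem integrableOn_pow_mul (hf : IntegrableOn f (Set.Icc 0 1)) (j : ℕ) :
    IntegrableOn (fun x => x ^ j * f x) (Set.Icc 0 1) :=
  hf.continuousOn_mul (continuous_pow j).continuousOn isCompact_Icc

theorem setIntegral_pow_mul_nonneg (hf_nonneg : ∀ x ∈ Set.Icc (0 : ℝ) 1, 0 ≤ f x) (j : ℕ) :
    0 ≤ ∫ x in Set.Icc (0 : ℝ) 1, x ^ j * f x :=
  setIntegral_nonneg measurableSet_Icc fun x hx => mul_nonneg (pow_nonneg hx.1 j) (hf_nonneg x hx)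

theorem setIntegral_pow_mul_le_one (hf_nonneg : ∀ x ∈ Set.Icc (0 : ℝ) 1, 0 ≤ f x)
    (hf_int : IntegrableOn f (Set.Icc 0 1)) (hf_prob : ∫ x in Set.Icc (0 : ℝ) 1, f x = 1)
    (j : ℕ) : ∫ x in Set.Icc (0 : ℝ) 1, x ^ j * f x ≤ 1 :=
  (setIntegral_mono_on (integrableOn_pow_mul hf_int j) hf_int measurableSet_Icc
    fun x hx => mul_le_of_le_one_left (hf_nonneg x hx) (pow_le_one₀ hx.1 hx.2)).trans_eq hf_prob

theorem abs_setIntegral_pow_mul_sub_le (hδ : 0 ≤ δ) (hf_int : IntegrableOn f (Set.Icc 0 1))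
    (hf_asymp : ∀ x ∈ Set.Ico (0 : ℝ) 1, |f x - c| ≤ C * (1 - x) ^ δ) (j : ℕ) :
    |(∫ x in Set.Icc (0 : ℝ) 1, x ^ j * f x) - c / ((j : ℝ) + 1)|
      ≤ C * ∫ x in Set.Icc (0 : ℝ) 1, x ^ j * (1 - x) ^ δ := by
  have hpow : IntegrableOn (fun x : ℝ => x ^ j) (Set.Icc 0 1) :=
    (continuous_pow j).continuousOn.integrableOn_compact isCompact_Icc
  have hdiff : (∫ x in Set.Icc (0 : ℝ) 1, x ^ j * f x) - c / ((j : ℝ) + 1)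
      = ∫ x in Set.Icc (0 : ℝ) 1, x ^ j * (f x - c) := by
    simp_rw [mul_sub]
    rw [integral_sub (integrableOn_pow_mul hf_int j) (hpow.mul_const c), integral_mul_const,
      integral_Icc_pow, div_mul_eq_mul_div, one_mul]
  rw [hdiff, ← integral_const_mul, integral_Icc_eq_integral_Ico, integral_Icc_eq_integral_Ico,
    ← Real.norm_eq_abs]
  refine norm_integral_le_of_norm_le (IntegrableOn.mono_set
    ((integrableOn_pow_mul_one_sub_rpow hδ j).const_mul C) Set.Ico_subset_Icc_self) ?_
  filter_upwards [ae_restrict_mem measurableSet_Ico] with x hx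
  rw [Real.norm_eq_abs, abs_mul, abs_of_nonneg (pow_nonneg hx.1 j), mul_left_comm]
  exact mul_le_mul_of_nonneg_left (hf_asymp x hx) (pow_nonneg hx.1 j)

theorem setIntegral_pow_succ_mul_le (hc : 0 ≤ c) (hδ : 0 ≤ δ) (hC : 0 ≤ C)
    (hf_int : IntegrableOn f (Set.Icc 0 1))
    (hf_asymp : ∀ x ∈ Set.Ico (0 : ℝ) 1, |f x - c| ≤ C * (1 - x) ^ δ) (j : ℕ) :
    ∫ x in Set.Icc (0 : ℝ) 1, x ^ (j + 1) * f x ≤ (c + C) / ((j : ℝ) + 1) := by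
  have hclose := (abs_le.1 (abs_setIntegral_pow_mul_sub_le hδ hf_int hf_asymp (j + 1))).2
  have hbeta := mul_le_mul_of_nonneg_left (integral_pow_mul_one_sub_rpow_le hδ (j + 1)) hC
  calc ∫ x in Set.Icc (0 : ℝ) 1, x ^ (j + 1) * f x
      ≤ (c + C) / (((j + 1 : ℕ) : ℝ) + 1) := by rw [add_div, div_eq_mul_one_div C]; linarith
    _ ≤ (c + C) / ((j : ℝ) + 1) := by gcongr; linarith

theorem abs_sum_range_setIntegral_pow_succ_mul_sub_log_le (hδ : 0 < δ) (hC : 0 ≤ C)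
    (hf_int : IntegrableOn f (Set.Icc 0 1))
    (hf_asymp : ∀ x ∈ Set.Ico (0 : ℝ) 1, |f x - c| ≤ C * (1 - x) ^ δ) (n : ℕ) :
    |∑ j ∈ range n, (∫ x in Set.Icc (0 : ℝ) 1, x ^ (j + 1) * f x) - c * Real.log n|
      ≤ C / δ + |c| := by
  have herror :
      |∑ j ∈ range n, ((∫ x in Set.Icc (0 : ℝ) 1, x ^ (j + 1) * f x) - c / ((j : ℝ) + 2))|
      ≤ C / δ := by
    calc _ ≤ ∑ j ∈ range n, C * ∫ x in Set.Icc (0 : ℝ) 1, x ^ (j + 1) * (1 - x) ^ δ := by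
          refine (abs_sum_le_sum_abs _ _).trans (sum_le_sum fun j _ => ?_)
          have := abs_setIntegral_pow_mul_sub_le hδ.le hf_int hf_asymp (j + 1)
          push_cast at this
          rwa [add_assoc, one_add_one_eq_two] at this
      _ ≤ C * (1 / δ) := by
          rw [← mul_sum]
          exact mul_le_mul_of_nonneg_left (sum_range_integral_pow_succ_mul_one_sub_rpow_le hδ n) hC
      _ = C / δ := mul_one_div C δ
  have hharmonic : |c * (∑ j ∈ range n, 1 / ((j : ℝ) + 2) - Real.log n)| ≤ |c| := by
    rw [abs_mul]
    exact mul_le_of_le_one_right (abs_nonneg c) (abs_sum_range_one_div_add_two_sub_log_le n)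
  have hsplit : ∑ j ∈ range n, (∫ x in Set.Icc (0 : ℝ) 1, x ^ (j + 1) * f x) - c * Real.log n
      = ∑ j ∈ range n, ((∫ x in Set.Icc (0 : ℝ) 1, x ^ (j + 1) * f x) - c / ((j : ℝ) + 2))
        + c * (∑ j ∈ range n, 1 / ((j : ℝ) + 2) - Real.log n) := by
    rw [sum_sub_distrib, mul_sub, mul_sum]
    simp_rw [mul_one_div]
    ring
  rw [hsplit]
  exact (abs_add_le _ _).trans (add_le_add herror hharmonic)

end Density

/-- Let `μ` be a probability measure on `[0,1]` with density
`f` with respect to Lebesgue measure, and suppose `|f x - c| ≤ C (1-x)^δ` for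
all `x ∈ [0,1)`, with `c, δ, C > 0`.  Then, with `ζ_μ(k) = ∑_{j≥1} (m j)^k` the
moment zeta function of `μ`, there is a constant `C'` with
`|∑_{k=2}^n (-1)^k C(n,k) ζ_μ(k) - c n log n| ≤ C' n` for all `n ≥ 2`. -/
theorem stmt_14 (f : ℝ → ℝ) (c δ C : ℝ) (hc : 0 < c) (hδ : 0 < δ) (hC : 0 < C)
    (hf_nonneg : ∀ x ∈ Set.Icc (0 : ℝ) 1, 0 ≤ f x)
    (hf_int : IntegrableOn f (Set.Icc (0 : ℝ) 1) volume)
    (hf_prob : ∫ x in Set.Icc (0 : ℝ) 1, f x = 1)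
    (hf_asymp : ∀ x ∈ Set.Ico (0 : ℝ) 1, |f x - c| ≤ C * (1 - x) ^ δ)
    (m : ℕ → ℝ) (hm : ∀ j, m j = ∫ x in Set.Icc (0 : ℝ) 1, x ^ j * f x) :
    ∃ C' : ℝ, ∀ n : ℕ, 2 ≤ n →
      |(∑ k ∈ Icc 2 n, (-1 : ℝ) ^ k * (n.choose k : ℝ) * ∑' j : ℕ, m (j + 1) ^ k)
          - c * n * Real.log n| ≤ C' * n := by
  simp_rw [hm]
  exact ⟨_, fun n hn => abs_sum_neg_one_pow_mul_choose_mul_tsum_pow_sub_le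
    (fun j => setIntegral_pow_mul_nonneg hf_nonneg (j + 1))
    (fun j => setIntegral_pow_mul_le_one hf_nonneg hf_int hf_prob (j + 1))
    (setIntegral_pow_succ_mul_le hc.le hδ.le hC.le hf_int hf_asymp)
    (abs_sum_range_setIntegral_pow_succ_mul_sub_log_le hδ hC.le hf_int hf_asymp) (by omega)⟩
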